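/- Let m ≥ 1. The polynomial G_2(m,2) ∈ ℤ[x], whose roots are the Misiurewicz parameters c with exact type (m,2) for x^2 + c, is irreducible over ℚ. Its degree is 2^{m−1}−1 if m is odd and 2^{m−1} if m is even, and any root c satisfies [ℚ(c):ℚ] equal to that degree. -/

import Mathlib

/-!
Write `g_n = f_c^n(0)` and `Φ₂(x) = f_c(x) + x + 1 = x² + x + c + 1`, so that
`f_c²(x) - x = (f_c(x) - x) Φ₂(x)`. Exact type `(m, 2)` gives `Φ₂(g_m) = 0 ≠ Φ₂(g_{m-1})`,
and since `Φ₂(g_m) = (g_m - g_{m-1} + 1) Φ₂(g_{m-1})`, `c` is a root of `E = g_m - g_{m-1} + 1`,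
a monic polynomial of degree `2^(m-1)`. As `g_{n+1} ≡ g_n + X^(2^n) (mod 2)`, we get
`E ≡ (X + 1)^(2^(m-1)) (mod 2)`. At `c = -1` the orbit of `0` is `0, -1, 0, …`: for `m` even
`E(-1) = 2`, while for `m` odd `-1` is a simple root of `E` with `E'(-1) = 2`. Hence `E`,
resp. `E / (X + 1)`, is Eisenstein at `2` around `-1`, so it is the minimal polynomial of `c`
(`c ≠ -1` because `0` is not periodic).
-/

open NumberField Polynomial

theorem Polynomial.Monic.irreducible_of_map_eq_X_sub_C_pow {p : ℕ} [Fact p.Prime] {f : ℤ[X]}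
    (hf : f.Monic) (hdeg : 0 < f.natDegree) (a : ℤ) (k : ℕ)
    (hmap : f.map (Int.castRingHom (ZMod p)) = (X - C (a : ZMod p)) ^ k)
    (heval : ¬ (p : ℤ) ^ 2 ∣ f.eval a) : Irreducible f := by
  refine generalizedEisenstein (K := ZMod p) (q := X - C a) (p := k)
    (by simpa using irreducible_X_sub_C (a : ZMod p)) (monic_X_sub_C a) hf.isPrimitive hdeg
    (by simp [hf.leadingCoeff]) (by simpa [hf.leadingCoeff, algebraMap_int_eq] using hmap) ?_
  rw [modByMonic_X_sub_C_eq_C_eval, Polynomial.map_C, Ne, C_eq_zero,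
    Ideal.Quotient.eq_zero_iff_mem, algebraMap_int_eq, ZMod.ker_intCastRingHom,
    Ideal.span_singleton_pow, Ideal.mem_span_singleton]
  exact heval

theorem finrank_eq_natDegree_of_adjoin_eq_top {K : Type*} [Field K] [Algebra ℚ K] {x : K}
    (hx : IntermediateField.adjoin ℚ {x} = ⊤) {f : ℤ[X]} (hmo : f.Monic)
    (hirr : Irreducible f) (hf : aeval x f = 0) : Module.finrank ℚ K = f.natDegree := by
  have hirrℚ : Irreducible (f.map (algebraMap ℤ ℚ)) :=
    hmo.irreducible_iff_irreducible_map_fraction_map.mp hirr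
  have hfℚ : aeval x (f.map (algebraMap ℤ ℚ)) = 0 := by rwa [aeval_map_algebraMap]
  have hmoℚ : (f.map (algebraMap ℤ ℚ)).Monic := hmo.map _
  rw [← IntermediateField.finrank_top', ← hx,
    IntermediateField.adjoin.finrank ⟨_, hmoℚ, hfℚ⟩,
    ← minpoly.eq_of_irreducible_of_monic hirrℚ hfℚ hmoℚ, hmo.natDegree_map]

theorem Polynomial.monic_X_add_one_pow {R : Type*} [Semiring R] (k : ℕ) :
    ((X + 1 : R[X]) ^ k).Monic := by
  simpa using (monic_X_add_C (1 : R)).pow k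

theorem apply_eq_sub_one_of_period_two {R : Type*} [CommRing R] [NoZeroDivisors R] {c : R}
    {f : R → R} (hf : ∀ x, f x = x ^ 2 + c) {x : R} (hper : f (f (f x)) = f x)
    (hmin : f (f x) ≠ f x) (htail : f (f x) ≠ x) : f x = x - 1 := by
  have hsub : ∀ y, f (f y) - y = (f y - y) * (f y + y + 1) := fun y => by simp only [hf]; ring
  have hfac : ∀ y, f (f y) + f y + 1 = (f y - y + 1) * (f y + y + 1) := fun y => by
    simp only [hf]; ring
  have hfx : f (f x) + f x + 1 = 0 :=
    (mul_eq_zero.mp (by rw [← hsub, hper, sub_self])).resolve_left (sub_ne_zero.mpr hmin)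
  have hx : f x + x + 1 ≠ 0 :=
    right_ne_zero_of_mul (by rw [← hsub]; exact sub_ne_zero.mpr htail)
  rw [hfac] at hfx
  linear_combination (mul_eq_zero.mp hfx).resolve_right hx

namespace Misiurewicz

noncomputable def gleasonPoly : ℕ → ℤ[X]
  | 0 => 0
  | n + 1 => gleasonPoly n ^ 2 + X

theorem gleasonPoly_zero : gleasonPoly 0 = 0 := rfl

theorem gleasonPoly_succ (n : ℕ) : gleasonPoly (n + 1) = gleasonPoly n ^ 2 + X := rfl

theorem aeval_gleasonPoly {A : Type*} [CommRing A] {c : A} {f : A → A}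
    (hf : ∀ x, f x = x ^ 2 + c) (n : ℕ) : aeval c (gleasonPoly n) = f^[n] 0 := by
  induction n with
  | zero => simp [gleasonPoly_zero]
  | succ n ih => simp [gleasonPoly_succ, Function.iterate_succ_apply', ih, hf]

theorem natDegree_gleasonPoly_succ (n : ℕ) : (gleasonPoly (n + 1)).natDegree = 2 ^ n := by
  induction n with
  | zero => simp [gleasonPoly_succ, gleasonPoly_zero]
  | succ n ih =>
    have hsq : (gleasonPoly (n + 1) ^ 2).natDegree = 2 ^ (n + 1) := by
      rw [natDegree_pow, ih, pow_succ, mul_comm]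
    have hX : (X : ℤ[X]).natDegree < (gleasonPoly (n + 1) ^ 2).natDegree := by
      rw [hsq, natDegree_X]
      exact Nat.one_lt_two_pow n.succ_ne_zero
    rw [gleasonPoly_succ, natDegree_add_eq_left_of_natDegree_lt hX, hsq]

theorem monic_gleasonPoly_succ (n : ℕ) : (gleasonPoly (n + 1)).Monic := by
  induction n with
  | zero => simp [gleasonPoly_succ, gleasonPoly_zero]
  | succ n ih =>
    refine (ih.pow 2).add_of_left (degree_lt_degree ?_)
    rw [ih.natDegree_pow, natDegree_gleasonPoly_succ, natDegree_X]
    have := Nat.one_le_two_pow (n := n)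
    omega

theorem natDegree_gleasonPoly_lt (n : ℕ) : (gleasonPoly n).natDegree < 2 ^ n := by
  cases n with
  | zero => simp [gleasonPoly_zero]
  | succ n => rw [natDegree_gleasonPoly_succ]; exact Nat.pow_lt_pow_succ one_lt_two

theorem degree_one_sub_gleasonPoly_lt (n : ℕ) :
    (1 - gleasonPoly n).degree < (gleasonPoly (n + 1)).degree := by
  refine degree_lt_degree ((natDegree_sub_le _ _).trans_lt ?_)
  rw [natDegree_one, natDegree_gleasonPoly_succ]
  exact max_lt (Nat.two_pow_pos n) (natDegree_gleasonPoly_lt n)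

theorem map_gleasonPoly_succ (n : ℕ) : (gleasonPoly (n + 1)).map (Int.castRingHom (ZMod 2)) =
    (gleasonPoly n).map (Int.castRingHom (ZMod 2)) + X ^ 2 ^ n := by
  induction n with
  | zero => simp [gleasonPoly_succ, gleasonPoly_zero]
  | succ n ih =>
    conv_rhs => rw [gleasonPoly_succ n]
    rw [gleasonPoly_succ (n + 1), Polynomial.map_add, Polynomial.map_pow, ih, add_pow_char,
      Polynomial.map_add, Polynomial.map_pow, Polynomial.map_X, ← pow_mul, ← pow_succ]
    ring

theorem eval_neg_one_gleasonPoly (n : ℕ) :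
    (gleasonPoly n).eval (-1) = if Even n then 0 else -1 := by
  induction n with
  | zero => simp [gleasonPoly_zero]
  | succ n ih =>
    simp only [gleasonPoly_succ, eval_add, eval_pow, eval_X, ih, Nat.even_add_one]
    split_ifs <;> norm_num

theorem eval_neg_one_derivative_gleasonPoly_succ (n : ℕ) :
    (derivative (gleasonPoly (n + 1))).eval (-1) = (-1) ^ n := by
  induction n with
  | zero => simp [gleasonPoly_succ, gleasonPoly_zero]
  | succ n ih =>
    rw [gleasonPoly_succ, derivative_add, derivative_sq, derivative_X, eval_add, eval_mul,
      eval_mul, eval_C, ih, eval_neg_one_gleasonPoly, eval_one, pow_succ]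
    rcases Nat.even_or_odd n with hn | hn
    · simp [Nat.even_add_one, hn, hn.neg_one_pow]
    · simp [Nat.even_add_one, Nat.not_even_iff_odd.mpr hn, hn.neg_one_pow]

/-- `Φ*_{n+1,2}(0) = Φ₂(g_{n+1}) / Φ₂(g_n)` in the notation of Hutz–Towsley. -/
noncomputable def dynatomicQuot (n : ℕ) : ℤ[X] := gleasonPoly (n + 1) - gleasonPoly n + 1

theorem dynatomicQuot_eq (n : ℕ) :
    dynatomicQuot n = gleasonPoly (n + 1) + (1 - gleasonPoly n) := by
  rw [dynatomicQuot]; ring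

theorem monic_dynatomicQuot (n : ℕ) : (dynatomicQuot n).Monic := by
  rw [dynatomicQuot_eq]
  exact (monic_gleasonPoly_succ n).add_of_left (degree_one_sub_gleasonPoly_lt n)

theorem natDegree_dynatomicQuot (n : ℕ) : (dynatomicQuot n).natDegree = 2 ^ n := by
  rw [dynatomicQuot_eq, natDegree_add_eq_left_of_degree_lt (degree_one_sub_gleasonPoly_lt n),
    natDegree_gleasonPoly_succ]

theorem map_dynatomicQuot (n : ℕ) :
    (dynatomicQuot n).map (Int.castRingHom (ZMod 2)) = (X + 1) ^ 2 ^ n := by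
  rw [dynatomicQuot, Polynomial.map_add, Polynomial.map_sub, map_gleasonPoly_succ,
    Polynomial.map_one, add_pow_char_pow, one_pow]
  ring

theorem eval_neg_one_dynatomicQuot (n : ℕ) :
    (dynatomicQuot n).eval (-1) = if Even n then 0 else 2 := by
  simp only [dynatomicQuot, eval_add, eval_sub, eval_one, eval_neg_one_gleasonPoly,
    Nat.even_add_one]
  split_ifs <;> norm_num

theorem eval_neg_one_derivative_dynatomicQuot {n : ℕ} (hn : Even n) (hn0 : n ≠ 0) :
    (derivative (dynatomicQuot n)).eval (-1) = 2 := by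
  obtain ⟨k, rfl⟩ := Nat.exists_eq_add_one_of_ne_zero hn0
  have hk : Odd k := Nat.not_even_iff_odd.mp (Nat.even_add_one.mp hn)
  rw [dynatomicQuot, derivative_add, derivative_sub, derivative_one, add_zero, eval_sub,
    eval_neg_one_derivative_gleasonPoly_succ, eval_neg_one_derivative_gleasonPoly_succ,
    hn.neg_one_pow, hk.neg_one_pow]
  norm_num

/-- `G_2(n+1, 2)`: note the index shift. -/
noncomputable def misiurewiczPoly (n : ℕ) : ℤ[X] :=
  if Even n then dynatomicQuot n /ₘ (X + 1) else dynatomicQuot n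

theorem X_add_one_pow_mul_misiurewiczPoly (n : ℕ) :
    (X + 1) ^ (if Even n then 1 else 0) * misiurewiczPoly n = dynatomicQuot n := by
  rw [misiurewiczPoly]
  split_ifs with hn
  · rw [pow_one, show (X + 1 : ℤ[X]) = X - C (-1) by simp, mul_divByMonic_eq_iff_isRoot, IsRoot,
      eval_neg_one_dynatomicQuot, if_pos hn]
  · rw [pow_zero, one_mul]

theorem monic_misiurewiczPoly (n : ℕ) : (misiurewiczPoly n).Monic :=
  (monic_X_add_one_pow (if Even n then 1 else 0)).of_mul_monic_left <| by
    rw [X_add_one_pow_mul_misiurewiczPoly]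
    exact monic_dynatomicQuot n

theorem natDegree_misiurewiczPoly (n : ℕ) :
    (misiurewiczPoly n).natDegree = 2 ^ n - if Even n then 1 else 0 := by
  have h := congrArg natDegree (X_add_one_pow_mul_misiurewiczPoly n)
  rw [(monic_X_add_one_pow _).natDegree_mul (monic_misiurewiczPoly n), natDegree_pow,
    natDegree_dynatomicQuot, show (X + 1 : ℤ[X]) = X + C 1 by simp, natDegree_X_add_C] at h
  omega

theorem map_misiurewiczPoly (n : ℕ) : (misiurewiczPoly n).map (Int.castRingHom (ZMod 2)) =
    (X + 1) ^ (misiurewiczPoly n).natDegree := by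
  have h := congrArg (map (Int.castRingHom (ZMod 2))) (X_add_one_pow_mul_misiurewiczPoly n)
  rw [Polynomial.map_mul, map_dynatomicQuot, Polynomial.map_pow, Polynomial.map_add,
    Polynomial.map_X, Polynomial.map_one] at h
  refine mul_left_cancel₀ (pow_ne_zero (if Even n then 1 else 0) (X_add_C_ne_zero 1)) ?_
  rw [C_1, h, natDegree_misiurewiczPoly, ← pow_add, Nat.add_sub_cancel']
  split_ifs <;> simp [Nat.one_le_two_pow]

theorem eval_neg_one_misiurewiczPoly {n : ℕ} (hn : n ≠ 0) :
    (misiurewiczPoly n).eval (-1) = 2 := by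
  have h := X_add_one_pow_mul_misiurewiczPoly n
  split_ifs at h with he
  · have hd := congrArg (fun p => (derivative p).eval (-1)) h
    simp only [eval_neg_one_derivative_dynatomicQuot he hn] at hd
    simpa using hd
  · rw [pow_zero, one_mul] at h
    rw [h, eval_neg_one_dynatomicQuot, if_neg he]

theorem aeval_misiurewiczPoly_eq_zero {A : Type*} [CommRing A] [NoZeroDivisors A] {c : A}
    (hc : c + 1 ≠ 0) {n : ℕ} (h : aeval c (dynatomicQuot n) = 0) :
    aeval c (misiurewiczPoly n) = 0 := by
  rw [← X_add_one_pow_mul_misiurewiczPoly, map_mul, map_pow, map_add, aeval_X, map_one] at h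
  exact (mul_eq_zero.mp h).resolve_left (pow_ne_zero _ hc)

theorem irreducible_misiurewiczPoly {n : ℕ} (hn : n ≠ 0) : Irreducible (misiurewiczPoly n) := by
  refine (monic_misiurewiczPoly n).irreducible_of_map_eq_X_sub_C_pow (p := 2) ?_ (-1)
    (misiurewiczPoly n).natDegree ?_ ?_
  · rw [natDegree_misiurewiczPoly]
    have := Nat.one_lt_two_pow hn
    split_ifs <;> omega
  · rw [map_misiurewiczPoly, Int.cast_neg, Int.cast_one, C_neg, C_1, sub_neg_eq_add]
  · rw [eval_neg_one_misiurewiczPoly hn]; norm_num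

end Misiurewicz

open Misiurewicz in
/-- Let `m ≥ 1`. The polynomial `G_2(m,2)`, whose roots are the
Misiurewicz parameters `c` of exact type `(m,2)` for `x^2 + c`, is irreducible over
`ℚ`; its degree is `2^(m−1) − 1` if `m` is odd and `2^(m−1)` if `m` is even.
Equivalently (as formalized here): any such parameter `c` satisfies
`[ℚ(c) : ℚ]` equal to that degree. -/
theorem degree_of_misiurewicz_param_period_two {K : Type*} [Field K] [NumberField K]
    (m : ℕ) (hm : 1 ≤ m)
    (c : 𝓞 K)
    (hK : IntermediateField.adjoin ℚ {algebraMap (𝓞 K) K c} = ⊤)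
    (f : 𝓞 K → 𝓞 K) (hf : f = fun x => x ^ 2 + c)
    (hper : f^[m + 2] 0 = f^[m] 0)
    (hmin : f^[m + 1] 0 ≠ f^[m] 0)
    (htail : ∀ k, k < m → f^[k + 2] 0 ≠ f^[k] 0) :
    Module.finrank ℚ K = if Odd m then 2 ^ (m - 1) - 1 else 2 ^ (m - 1) := by
  have hf' : ∀ x, f x = x ^ 2 + c := fun x => by rw [hf]
  obtain ⟨n, rfl⟩ := Nat.exists_eq_add_of_le' hm
  have hc : c + 1 ≠ 0 := fun h => htail 0 (by omega) <| by
    simp only [Function.iterate_succ_apply', Function.iterate_zero_apply, hf']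
    linear_combination c * h
  have hE : aeval c (dynatomicQuot n) = 0 := by
    simp only [Function.iterate_succ_apply'] at hper hmin htail
    rw [dynatomicQuot, map_add, map_sub, map_one, aeval_gleasonPoly hf', aeval_gleasonPoly hf',
      Function.iterate_succ_apply',
      apply_eq_sub_one_of_period_two hf' hper hmin (htail n (by omega))]
    ring
  have hn : n ≠ 0 := by
    rintro rfl
    apply hc
    simpa [dynatomicQuot, gleasonPoly_succ, gleasonPoly_zero] using hE
  rw [finrank_eq_natDegree_of_adjoin_eq_top hK (monic_misiurewiczPoly n)
    (irreducible_misiurewiczPoly hn)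
    (by rw [aeval_algebraMap_apply, aeval_misiurewiczPoly_eq_zero hc hE, map_zero]),
    natDegree_misiurewiczPoly]
  by_cases he : Even n <;> simp [Nat.odd_add_one, he]
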